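/- arXiv:0810.4221 — 2 statements merged into one kernel-verified Lean document; each statement's English description precedes it below -/
import Mathlib

section
/- Let $\rho \in (0,1]$. Then $\int_0^\infty e^{-t} \rho^{\tanh(t/2)}\, dt \le \int_0^1 2\rho^u\, du = \frac{2(1-\rho)}{-\log \rho}$ (interpreted as $2$ when $\rho = 1$). -/
/-!
Since `tanh s ≥ 1 - exp (-s)` and `ρ ≤ 1`, the integrand is bounded by
`exp (-t) * ρ ^ (1 - exp (-(t / 2)))`. The substitution `u = 1 - exp (-(t / 2))` turns
`exp (-t) dt` into `2 (1 - u) du`, and dropping the factor `1 - u ≤ 1` leaves `∫₀¹ 2 ρ ^ u du`.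
-/

open MeasureTheory Real Set

namespace Real

-- With `a = exp (-x)`: `tanh x - (1 - a) = a (1 - a)² / (1 + a²)`.
lemma one_sub_exp_neg_le_tanh (x : ℝ) : 1 - exp (-x) ≤ tanh x := by
  rw [tanh_eq, le_div_iff₀ (by positivity)]
  have h_inv : exp x * exp (-x) = 1 := by rw [← exp_add, add_neg_cancel, exp_zero]
  nlinarith [mul_nonneg (exp_pos (-x)).le (sq_nonneg (1 - exp (-x)))]

end Real

theorem intervalIntegral.integral_const_rpow {b : ℝ} (hb : 0 < b) (hb1 : b ≠ 1) (x y : ℝ) :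
    ∫ u in x..y, b ^ u = (b ^ y - b ^ x) / log b := by
  have hlog : log b ≠ 0 := log_ne_zero_of_pos_of_ne_one hb hb1
  simp only [rpow_def_of_pos hb, integral_comp_mul_left (fun u => exp u) hlog, integral_exp,
    smul_eq_mul]
  field_simp

lemma image_one_sub_exp_neg_half_Ioi : (fun t : ℝ => 1 - exp (-(t / 2))) '' Ioi 0 = Ioo 0 1 := by
  ext u
  simp only [mem_image, mem_Ioi, mem_Ioo]
  constructor
  · rintro ⟨t, ht, rfl⟩
    exact ⟨by simp only [sub_pos, exp_lt_one_iff]; linarith, by linarith [exp_pos (-(t / 2))]⟩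
  · rintro ⟨hu0, hu1⟩
    refine ⟨-2 * log (1 - u), by nlinarith [log_neg (by linarith : 0 < 1 - u) (by linarith)], ?_⟩
    rw [show -(-2 * log (1 - u) / 2) = log (1 - u) by ring, exp_log (by linarith)]
    ring

theorem integral_exp_neg_smul_comp_one_sub_exp_neg_half {E : Type*} [NormedAddCommGroup E]
    [NormedSpace ℝ E] (φ : ℝ → E) :
    ∫ t in Ioi 0, exp (-t) • φ (1 - exp (-(t / 2))) = ∫ u in Ioo 0 1, (2 * (1 - u)) • φ u := by
  have hderiv : ∀ t ∈ Ioi (0 : ℝ),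
      HasDerivWithinAt (fun t => 1 - exp (-(t / 2))) (exp (-(t / 2)) / 2) (Ioi 0) t := by
    intro t _
    have := (((hasDerivAt_id t).div_const 2).neg.exp).const_sub 1
    exact (this.congr_deriv (by simp only [Pi.neg_apply, id]; ring)).hasDerivWithinAt
  have hinj : InjOn (fun t : ℝ => 1 - exp (-(t / 2))) (Ioi 0) := by
    intro s _ t _ hst
    simpa using hst
  rw [← image_one_sub_exp_neg_half_Ioi,
    integral_image_eq_integral_abs_deriv_smul measurableSet_Ioi hderiv hinj]
  refine setIntegral_congr_fun measurableSet_Ioi fun t _ => ?_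
  have hsq : exp (-t) = exp (-(t / 2)) * exp (-(t / 2)) := by rw [← exp_add]; ring_nf
  simp only [smul_smul, abs_of_pos (half_pos (exp_pos _)), hsq]
  ring_nf

lemma integrableOn_Ioi_exp_neg_mul_rpow {ρ : ℝ} (hρ0 : 0 ≤ ρ) (hρ1 : ρ ≤ 1) {f : ℝ → ℝ}
    (hf : Measurable f) (hf0 : ∀ t ∈ Ioi 0, 0 ≤ f t) :
    IntegrableOn (fun t => exp (-t) * ρ ^ f t) (Ioi 0) := by
  have hexp : IntegrableOn (fun t => exp (-t)) (Ioi 0) := by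
    simpa using exp_neg_integrableOn_Ioi 0 one_pos
  refine hexp.mul_bdd (c := 1) (measurable_const.pow hf).aestronglyMeasurable ?_
  filter_upwards [ae_restrict_mem measurableSet_Ioi] with t ht
  rw [norm_of_nonneg (rpow_nonneg hρ0 _)]
  exact rpow_le_one hρ0 hρ1 (hf0 t ht)

lemma integral_Ioo_zero_one_const_rpow {b : ℝ} (hb : 0 < b) (hb1 : b ≠ 1) :
    ∫ u in Ioo (0 : ℝ) 1, b ^ u = (b - 1) / log b := by
  rw [← integral_Ioc_eq_integral_Ioo, ← intervalIntegral.integral_of_le zero_le_one,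
    intervalIntegral.integral_const_rpow hb hb1, rpow_one, rpow_zero]

theorem exp_tanh_integral_bound (ρ : ℝ) (hρ0 : 0 < ρ) (hρ1 : ρ ≤ 1) :
    (∫ t in Set.Ioi (0 : ℝ), Real.exp (-t) * ρ ^ Real.tanh (t / 2))
      ≤ (∫ u in Set.Ioo (0 : ℝ) 1, 2 * ρ ^ u) ∧
    (∫ u in Set.Ioo (0 : ℝ) 1, 2 * ρ ^ u)
      = if ρ = 1 then 2 else 2 * (1 - ρ) / (-Real.log ρ) := by
  have hcont : Continuous fun u : ℝ => ρ ^ u := continuous_const_rpow hρ0.ne'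
  refine ⟨?_, ?_⟩
  · calc (∫ t in Ioi (0 : ℝ), exp (-t) * ρ ^ tanh (t / 2))
        ≤ ∫ t in Ioi 0, exp (-t) * ρ ^ (1 - exp (-(t / 2))) := by
          refine integral_mono_of_nonneg (.of_forall fun t => by positivity)
            (integrableOn_Ioi_exp_neg_mul_rpow hρ0.le hρ1 (by fun_prop) fun t ht => ?_)
            (.of_forall fun t => mul_le_mul_of_nonneg_left ?_ (exp_pos _).le)
          · linarith [exp_le_one_iff.mpr (by linarith [mem_Ioi.mp ht] : -(t / 2) ≤ 0)]
          · exact rpow_le_rpow_of_exponent_ge hρ0 hρ1 (one_sub_exp_neg_le_tanh _)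
      _ = ∫ u in Ioo (0 : ℝ) 1, 2 * (1 - u) * ρ ^ u :=
          integral_exp_neg_smul_comp_one_sub_exp_neg_half (ρ ^ ·)
      _ ≤ ∫ u in Ioo (0 : ℝ) 1, 2 * ρ ^ u := by
          refine setIntegral_mono_on
            ((by fun_prop : Continuous fun u => 2 * (1 - u) * ρ ^ u).integrableOn_Icc.mono_set
              Ioo_subset_Icc_self)
            ((continuous_const.mul hcont).integrableOn_Icc.mono_set Ioo_subset_Icc_self)
            measurableSet_Ioo fun u hu => ?_
          exact mul_le_mul_of_nonneg_right (by linarith [hu.1]) (rpow_nonneg hρ0.le u)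
  · split_ifs with h
    · simp [h]
    · rw [integral_const_mul, integral_Ioo_zero_one_const_rpow hρ0 h]
      ring
end

section
/- Suppose real random variables $M$ and $M'$ (with $M'$ an independent copy of $M$) satisfy: on an event $E$ with $\mathbb{P}(E^c) \le \gamma$, one has $|M - \overline{M}| \le \delta$ and $|M' - \overline{M}'| \le \delta$ where $\overline{M}, \overline{M}'$ are random variables with $\mathrm{Var}(\overline{M}) = \mathrm{Var}(\overline{M}') \le w$, $(\overline{M}, \overline{M}')$ are i.i.d., and $\mathbb{E}(M - M')^4 \le K$. Then $\mathrm{Var}(M) \le 3\delta^2 + 3w + \frac{1}{2}\sqrt{2\gamma K}$. -/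
/-!
Since `M'` is an independent copy of `M`, `2 Var M = 𝔼 (M - M')²`, and likewise for `Mb, Mb'`.
On `E`, writing `M - M' = (M - Mb) + (Mb - Mb') + (Mb' - M')` and using
`(x + y + z)² ≤ 3 (x² + y² + z²)` gives `(M - M')² ≤ 6 δ² + 3 (Mb - Mb')²`, whose expectation is
`6 δ² + 6 Var Mb`. On `Eᶜ`, Cauchy–Schwarz bounds the contribution by `√(ℙ Eᶜ) √(𝔼 (M - M')⁴)`.
-/

open MeasureTheory ProbabilityTheory

lemma sq_add_add_le_three_mul_add_add (x y z : ℝ) :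
    (x + y + z) ^ 2 ≤ 3 * (x ^ 2 + y ^ 2 + z ^ 2) := by
  nlinarith [sq_nonneg (x - y), sq_nonneg (y - z), sq_nonneg (x - z)]

lemma sq_sub_le_of_abs_sub_le {a a' b b' δ : ℝ} (ha : |a - b| ≤ δ) (ha' : |a' - b'| ≤ δ) :
    (a - a') ^ 2 ≤ 6 * δ ^ 2 + 3 * (b - b') ^ 2 := by
  have hsq : ∀ {x : ℝ}, |x| ≤ δ → x ^ 2 ≤ δ ^ 2 := fun hx =>
    sq_le_sq' (neg_le_of_abs_le hx) (le_of_abs_le hx)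
  calc (a - a') ^ 2 = ((a - b) + (b - b') + (b' - a')) ^ 2 := by ring
    _ ≤ 3 * ((a - b) ^ 2 + (b - b') ^ 2 + (b' - a') ^ 2) := sq_add_add_le_three_mul_add_add ..
    _ ≤ 6 * δ ^ 2 + 3 * (b - b') ^ 2 := by
      linarith [hsq ha, hsq (abs_sub_comm a' b' ▸ ha')]

section

variable {Ω : Type*} [MeasurableSpace Ω] {μ : Measure Ω}

lemma integral_le_integral_add_setIntegral_compl {f g : Ω → ℝ} {s : Set Ω}
    (hs : MeasurableSet s) (hf : Integrable f μ) (hg : Integrable g μ) (hg0 : 0 ≤ᵐ[μ] g)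
    (hfg : ∀ x ∈ s, f x ≤ g x) :
    ∫ x, f x ∂μ ≤ ∫ x, g x ∂μ + ∫ x in sᶜ, f x ∂μ := by
  rw [← integral_add_compl hs hf]
  gcongr
  exact (setIntegral_mono_on hf.integrableOn hg.integrableOn hs hfg).trans
    (setIntegral_le_integral hg hg0)

lemma setIntegral_le_sqrt_measureReal_mul_sqrt_integral_sq [IsFiniteMeasure μ] {f : Ω → ℝ}
    {s : Set Ω} (hf : MemLp f 2 μ) :
    ∫ x in s, f x ∂μ ≤ √(μ.real s) * √(∫ x, f x ^ 2 ∂μ) := by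
  have hf' : MemLp f (ENNReal.ofReal 2) (μ.restrict s) := by
    simpa using hf.restrict s
  have h1 : MemLp (fun _ => (1 : ℝ)) (ENNReal.ofReal 2) (μ.restrict s) := memLp_const 1
  have holder := integral_mul_norm_le_Lp_mul_Lq Real.HolderConjugate.two_two hf' h1
  simp only [norm_one, mul_one, integral_const, smul_eq_mul, one_pow, Real.rpow_two,
    Real.norm_eq_abs, sq_abs, ← Real.sqrt_eq_rpow, measureReal_restrict_apply_univ] at holder
  calc ∫ x in s, f x ∂μ ≤ ∫ x in s, |f x| ∂μ :=
      (le_abs_self _).trans abs_integral_le_integral_abs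
    _ ≤ √(∫ x in s, f x ^ 2 ∂μ) * √(μ.real s) := holder
    _ ≤ √(μ.real s) * √(∫ x, f x ^ 2 ∂μ) := by
      rw [mul_comm]
      exact mul_le_mul_of_nonneg_left (Real.sqrt_le_sqrt (setIntegral_le_integral
        hf.integrable_sq (ae_of_all _ fun x => sq_nonneg (f x)))) (Real.sqrt_nonneg _)

lemma integral_sub_sq_eq_two_mul_variance [IsProbabilityMeasure μ] {X Y : Ω → ℝ}
    (hX : MemLp X 2 μ) (hY : MemLp Y 2 μ) (hXY : IndepFun X Y μ) (hid : IdentDistrib X Y μ μ) :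
    ∫ ω, (X ω - Y ω) ^ 2 ∂μ = 2 * Var[X; μ] := by
  have hmean : ∫ ω, (X ω - Y ω) ∂μ = 0 := by
    rw [integral_sub (hX.integrable one_le_two) (hY.integrable one_le_two), hid.integral_eq,
      sub_self]
  have hvar := variance_eq_sub (hX.sub hY)
  simp only [Pi.pow_apply, Pi.sub_apply] at hvar
  rw [variance_sub hX hY, hXY.covariance_eq_zero hX hY, ← hid.variance_eq, hmean] at hvar
  linarith

end

theorem strong_mp_variance_bound_general {Ω : Type*} [MeasureSpace Ω]
    [IsProbabilityMeasure (ℙ : Measure Ω)]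
    (M M' Mb Mb' : Ω → ℝ) (E : Set Ω) (hE : MeasurableSet E)
    (δ γ w K : ℝ)
    (hMmem : MemLp M 2 ℙ) (hM'mem : MemLp M' 2 ℙ)
    (hMbmem : MemLp Mb 2 ℙ) (hMb'mem : MemLp Mb' 2 ℙ)
    (hindep : IndepFun M M' ℙ) (hident : IdentDistrib M M' ℙ ℙ)
    (hbindep : IndepFun Mb Mb' ℙ) (hbident : IdentDistrib Mb Mb' ℙ ℙ)
    (hvarb : variance Mb ℙ ≤ w)
    (hclose : ∀ ω ∈ E, |M ω - Mb ω| ≤ δ ∧ |M' ω - Mb' ω| ≤ δ)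
    (hEc : (ℙ Eᶜ).toReal ≤ γ)
    (hfourth : Integrable (fun ω => (M ω - M' ω) ^ 4) ℙ)
    (hKbd : ∫ ω, (M ω - M' ω) ^ 4 ≤ K) :
    variance M ℙ ≤ 3 * δ ^ 2 + 3 * w + (1 / 2) * Real.sqrt (2 * γ * K) := by
  have hdiff : MemLp (fun ω => M ω - M' ω) 2 ℙ := hMmem.sub hM'mem
  have hbdiff : Integrable (fun ω => (Mb ω - Mb' ω) ^ 2) ℙ := (hMbmem.sub hMb'mem).integrable_sq
  have hsq_sq : ∀ ω, ((M ω - M' ω) ^ 2) ^ 2 = (M ω - M' ω) ^ 4 := fun ω => by ring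
  have hdiff_sq : MemLp (fun ω => (M ω - M' ω) ^ 2) 2 ℙ :=
    (memLp_two_iff_integrable_sq (hdiff.aestronglyMeasurable.pow 2)).2 (by simpa [hsq_sq])
  have hsplit : ∫ ω, (M ω - M' ω) ^ 2 ≤
      (∫ ω, 6 * δ ^ 2 + 3 * (Mb ω - Mb' ω) ^ 2) + ∫ ω in Eᶜ, (M ω - M' ω) ^ 2 :=
    integral_le_integral_add_setIntegral_compl hE hdiff.integrable_sq
      ((integrable_const _).add (hbdiff.const_mul 3)) (ae_of_all _ fun ω => by positivity)
      fun ω hω => sq_sub_le_of_abs_sub_le (hclose ω hω).1 (hclose ω hω).2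
  rw [integral_sub_sq_eq_two_mul_variance hMmem hM'mem hindep hident,
    integral_add (integrable_const _) (hbdiff.const_mul 3), integral_const, probReal_univ,
    one_smul, integral_const_mul,
    integral_sub_sq_eq_two_mul_variance hMbmem hMb'mem hbindep hbident] at hsplit
  have hcompl : ∫ ω in Eᶜ, (M ω - M' ω) ^ 2 ≤ √(2 * γ * K) := by
    have hP0 : 0 ≤ (ℙ : Measure Ω).real Eᶜ := measureReal_nonneg
    have hI0 : 0 ≤ ∫ ω, (M ω - M' ω) ^ 4 := integral_nonneg fun ω => by positivity
    rw [← measureReal_def] at hEc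
    refine (setIntegral_le_sqrt_measureReal_mul_sqrt_integral_sq hdiff_sq).trans ?_
    simp only [hsq_sq, ← Real.sqrt_mul hP0]
    exact Real.sqrt_le_sqrt
      (by nlinarith [mul_le_mul hEc hKbd hI0 (hP0.trans hEc), mul_nonneg hP0 hI0])
  linarith

theorem strong_mp_variance_bound {Ω : Type*} [MeasureSpace Ω]
    [IsProbabilityMeasure (ℙ : Measure Ω)]
    (M M' Mb Mb' : Ω → ℝ) (E : Set Ω) (hE : MeasurableSet E)
    (δ γ w K : ℝ) (hδ : 0 ≤ δ) (hγ : 0 ≤ γ) (hK : 0 ≤ K)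
    (hMmem : MemLp M 2 ℙ) (hM'mem : MemLp M' 2 ℙ)
    (hMbmem : MemLp Mb 2 ℙ) (hMb'mem : MemLp Mb' 2 ℙ)
    (hindep : IndepFun M M' ℙ) (hident : IdentDistrib M M' ℙ ℙ)
    (hbindep : IndepFun Mb Mb' ℙ) (hbident : IdentDistrib Mb Mb' ℙ ℙ)
    (hvarb : variance Mb ℙ ≤ w) (hvarb' : variance Mb' ℙ ≤ w)
    (hclose : ∀ ω ∈ E, |M ω - Mb ω| ≤ δ ∧ |M' ω - Mb' ω| ≤ δ)
    (hEc : (ℙ Eᶜ).toReal ≤ γ)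
    (hfourth : Integrable (fun ω => (M ω - M' ω) ^ 4) ℙ)
    (hKbd : ∫ ω, (M ω - M' ω) ^ 4 ≤ K) :
    variance M ℙ ≤ 3 * δ ^ 2 + 3 * w + (1 / 2) * Real.sqrt (2 * γ * K) :=
  strong_mp_variance_bound_general M M' Mb Mb' E hE δ γ w K hMmem hM'mem hMbmem hMb'mem hindep
    hident hbindep hbident hvarb hclose hEc hfourth hKbd
end
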